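/- Let 0 ≤ x ≤ 1, 0 ≤ w ≤ n, p ∈ [0,1] and θ ∈ ℝ satisfy x = p·cos²θ + (1−p)·sin²θ. Then ∑_{w′=0}^{n} ∑_{w̃=0}^{w′} C(w, w̃)·C(n−w, w′−w̃) · p^{w′}(1−p)^{n−w′} · (sin²θ)^{a} (cos²θ)^{n−a} = x^w (1−x)^{n−w}, where a = w + w′ − 2w̃. -/

import Mathlib

/-!
Since `sin²θ + cos²θ = 1`, we have `x = p cos²θ + (1 - p) sin²θ` and
`1 - x = p sin²θ + (1 - p) cos²θ`. Expanding both powers binomially and grouping the product of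
the two expansions by the total number `w'` of factors carrying `p`, where `w̃` of them come from
`x^w`, gives exactly the double sum.
-/

open Finset

theorem Finset.sum_range_sum_range_sub_eq_sum_range_sum_range {M : Type*} [AddCommMonoid M]
    {m k : ℕ} {f : ℕ → ℕ → M} (hm : ∀ i j, m < i → f i j = 0)
    (hk : ∀ i j, k < j → f i j = 0) :
    ∑ N ∈ range (m + k + 1), ∑ i ∈ range (N + 1), f i (N - i) =
      ∑ i ∈ range (m + 1), ∑ j ∈ range (k + 1), f i j := by
  calc ∑ N ∈ range (m + k + 1), ∑ i ∈ range (N + 1), f i (N - i)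
      = ∑ i ∈ range (m + k + 1), ∑ j ∈ range (m + k + 1 - i), f i j := by
        have := sum_Ico_Ico_comm 0 (m + k + 1) fun i N => f i (N - i)
        simp only [sum_Ico_eq_sum_range, add_tsub_cancel_left, zero_add, tsub_zero] at this
        exact this.symm
    _ = ∑ i ∈ range (m + 1), ∑ j ∈ range (m + k + 1 - i), f i j := by
        refine (sum_subset (range_subset_range.2 (by omega)) fun i _ hi => ?_).symm
        exact sum_eq_zero fun j _ => hm i j (by simpa using hi)
    _ = ∑ i ∈ range (m + 1), ∑ j ∈ range (k + 1), f i j := by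
        refine sum_congr rfl fun i hi => ?_
        have hi : i ≤ m := Nat.lt_succ_iff.1 (mem_range.1 hi)
        refine (sum_subset (range_subset_range.2 (by omega)) fun j _ hj => ?_).symm
        exact hk i j (by simpa using hj)

theorem add_pow_mul_add_pow {R : Type*} [CommSemiring R] (a b c d : R) (m k : ℕ) :
    (a + b) ^ m * (c + d) ^ k =
      ∑ N ∈ range (m + k + 1), ∑ i ∈ range (N + 1),
        (m.choose i : R) * (k.choose (N - i) : R) *
          (a ^ i * b ^ (m - i) * (c ^ (N - i) * d ^ (k - (N - i)))) := by
  rw [sum_range_sum_range_sub_eq_sum_range_sum_range (f := fun i j =>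
      (m.choose i : R) * (k.choose j : R) * (a ^ i * b ^ (m - i) * (c ^ j * d ^ (k - j))))
      (fun i j h => by simp [Nat.choose_eq_zero_of_lt h])
      (fun i j h => by simp [Nat.choose_eq_zero_of_lt h]),
    add_pow, add_pow, sum_mul_sum]
  refine sum_congr rfl fun i _ => sum_congr rfl fun j _ => ?_
  ring

theorem dephasing_rotation_monomial_eq {R : Type*} [CommRing R] (p s c : R) {n w N i : ℕ}
    (hi : i ≤ w) (hiN : i ≤ N) (hNi : N - i ≤ n - w) (hw : w ≤ n) :
    (p * c) ^ i * ((1 - p) * s) ^ (w - i) * ((p * s) ^ (N - i) * ((1 - p) * c) ^ (n - w - (N - i)))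
      = p ^ N * (1 - p) ^ (n - N) * s ^ (w + N - 2 * i) * c ^ (n - (w + N - 2 * i)) := by
  have hN : N = i + (N - i) := by omega
  have hnN : n - N = (w - i) + (n - w - (N - i)) := by omega
  have hs : w + N - 2 * i = (w - i) + (N - i) := by omega
  have hc : n - (w + N - 2 * i) = i + (n - w - (N - i)) := by omega
  rw [hnN, hc, hs, hN, add_tsub_cancel_left]
  simp only [pow_add, mul_pow]
  ring

theorem Nat.choose_mul_choose_mul_congr {R : Type*} [CommSemiring R] {m k i j : ℕ} {A B : R}
    (h : i ≤ m → j ≤ k → A = B) :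
    (m.choose i : R) * ((k.choose j : R) * A) = (m.choose i : R) * ((k.choose j : R) * B) := by
  by_cases hi : i ≤ m
  · by_cases hj : j ≤ k
    · rw [h hi hj]
    · simp [Nat.choose_eq_zero_of_lt (not_le.1 hj)]
  · simp [Nat.choose_eq_zero_of_lt (not_le.1 hi)]

theorem conditional_channel_coefficient_general (n w : ℕ) (hw : w ≤ n) (p θ x : ℝ)
    (hx : x = p * Real.cos θ ^ 2 + (1 - p) * Real.sin θ ^ 2) :
    ∑ w' ∈ Finset.range (n + 1), ∑ wt ∈ Finset.range (w' + 1),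
        (Nat.choose w wt : ℝ) * (Nat.choose (n - w) (w' - wt) : ℝ) *
          p ^ w' * (1 - p) ^ (n - w') *
          (Real.sin θ ^ 2) ^ (w + w' - 2 * wt) * (Real.cos θ ^ 2) ^ (n - (w + w' - 2 * wt))
      = x ^ w * (1 - x) ^ (n - w) := by
  have h1x : 1 - x = p * Real.sin θ ^ 2 + (1 - p) * Real.cos θ ^ 2 := by
    linear_combination -hx - Real.sin_sq_add_cos_sq θ
  rw [h1x, hx, add_pow_mul_add_pow, Nat.add_sub_cancel' hw]
  refine sum_congr rfl fun N _ => sum_congr rfl fun i hi => ?_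
  simp only [mul_assoc]
  refine Nat.choose_mul_choose_mul_congr fun hiw hNi => ?_
  linear_combination
    (dephasing_rotation_monomial_eq p (Real.sin θ ^ 2) (Real.cos θ ^ 2) hiw
      (Nat.lt_succ_iff.1 (mem_range.1 hi)) hNi hw).symm

/-- The combinatorial identity computing the conditional effective channel coefficient
`x̄′_w = x^w (1−x)^{n−w}` for the repetition code under combined dephasing (probability `p`)
and Z-rotation (angle `θ`) noise, where `x = p·cos²θ + (1−p)·sin²θ`. -/
theorem conditional_channel_coefficient (n w : ℕ) (hw : w ≤ n) (p θ x : ℝ)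
    (hp : p ∈ Set.Icc (0 : ℝ) 1) (hx01 : x ∈ Set.Icc (0 : ℝ) 1)
    (hx : x = p * Real.cos θ ^ 2 + (1 - p) * Real.sin θ ^ 2) :
    ∑ w' ∈ Finset.range (n + 1), ∑ wt ∈ Finset.range (w' + 1),
        (Nat.choose w wt : ℝ) * (Nat.choose (n - w) (w' - wt) : ℝ) *
          p ^ w' * (1 - p) ^ (n - w') *
          (Real.sin θ ^ 2) ^ (w + w' - 2 * wt) * (Real.cos θ ^ 2) ^ (n - (w + w' - 2 * wt))
      = x ^ w * (1 - x) ^ (n - w) :=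
  conditional_channel_coefficient_general n w hw p θ x hx
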